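/- arXiv:1901.05503 — 2 statements merged into one kernel-verified Lean document; each statement's English description precedes it below -/
import Mathlib

section
/- Let P be a finite pure poset and, for 1 ≤ k ≤ h_P, set τ_k = {u ∈ P : h(u) < k}. Then each τ_k is an order ideal of P, and the edge set E of P̂ is the disjoint union of the sets E(τ_k) for k = 1, …, h_P. (On the Hibi toric variety this yields −K = Σ_{k=1}^{h_P} D_{E(τ_k)} ∼ h_P·D_{E(P)}.) -/
/-- The bounded poset `P̂ = 0̂ ⊕ P ⊕ 1̂`. -/
abbrev Phat (P : Type*) := WithBot (WithTop P)

/-- The inclusion `P → P̂`. -/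
def toHat {P : Type*} (u : P) : Phat P := ((u : WithTop P) : Phat P)

/-- The set of edges (covering pairs) of `P̂`; for `e = (u ⋖ v)` we write
`t(e) = e.1` and `s(e) = e.2`. -/
def edgeSet (P : Type*) [PartialOrder P] : Set (Phat P × Phat P) :=
  {e | e.1 ⋖ e.2}

/-- Membership of `a ∈ P̂` in `{0̂} ∪ τ` for a subset `τ ⊆ P`. -/
def memHat {P : Type*} (τ : Set P) (a : Phat P) : Prop :=
  a = ⊥ ∨ ∃ u ∈ τ, a = toHat u

/-- For an order ideal `τ`, the subset `E(τ) = {e ∈ E : t(e) ∈ {0̂} ∪ τ, s(e) ∉ {0̂} ∪ τ}`. -/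
def edgeCut {P : Type*} [PartialOrder P] (τ : Set P) : Set (Phat P × Phat P) :=
  {e ∈ edgeSet P | memHat τ e.1 ∧ ¬ memHat τ e.2}

/-- A finite poset is pure if all of its maximal chains have the same cardinality. -/
def IsPurePoset (P : Type*) [PartialOrder P] : Prop :=
  ∀ C₁ C₂ : Set P, IsMaxChain (· ≤ ·) C₁ → IsMaxChain (· ≤ ·) C₂ →
    C₁.ncard = C₂.ncard

/-! Purity passes from `P` to `P̂`, whose maximal chains are those of `P` together with `0̂`
and `1̂`. In a finite bounded pure poset every saturated chain from `0̂` to `1̂` has length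
`h(1̂)`, so the height of its `i`-th element is exactly `i`; refining `a ⋖ b` to such a chain
shows that covers raise the height by one. Hence an edge `a ⋖ b` leaves `{0̂} ∪ τ_k` exactly
when `k = h(b)`. -/

open Order

section Embedding

variable {α β : Type*} [PartialOrder α] [PartialOrder β] {C : Set β}

theorem IsMaxChain.mem_of_le_or_le (hC : IsMaxChain (· ≤ ·) C) {x : β}
    (hx : ∀ y ∈ C, x ≤ y ∨ y ≤ x) : x ∈ C :=
  (hC.2 (hC.1.insert fun y hy _ => hx y hy) (Set.subset_insert _ _)).symm ▸ Set.mem_insert _ _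

theorem IsMaxChain.preimage_orderEmbedding (hC : IsMaxChain (· ≤ ·) C) (f : α ↪o β)
    (hf : ∀ x ∉ Set.range f, ∀ y, x ≤ y ∨ y ≤ x) : IsMaxChain (· ≤ ·) (f ⁻¹' C) := by
  refine ⟨hC.1.preimage _ _ f f.injective fun _ _ => f.le_iff_le.1,
    fun D hD hCD => hCD.antisymm fun w hw => hC.mem_of_le_or_le fun x hx => ?_⟩
  obtain ⟨u, rfl⟩ | hx' := em (x ∈ Set.range f)
  · simpa only [f.le_iff_le] using hD.total hw (hCD hx)
  · exact (hf x hx' (f w)).symm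

theorem IsPurePoset.of_orderEmbedding [Finite β] (hα : IsPurePoset α) (f : α ↪o β)
    (hf : ∀ x ∉ Set.range f, ∀ y, x ≤ y ∨ y ≤ x) : IsPurePoset β := by
  have key : ∀ C : Set β, IsMaxChain (· ≤ ·) C →
      C.ncard = (f ⁻¹' C).ncard + (Set.range f)ᶜ.ncard := by
    intro C hC
    have hcompl : C \ Set.range f = (Set.range f)ᶜ :=
      Set.sdiff_eq_compl_inter.trans <| Set.inter_eq_left.2 fun x hx =>
        hC.mem_of_le_or_le fun y _ => hf x hx y
    rw [← Set.ncard_inter_add_ncard_sdiff_eq_ncard C (Set.range f), hcompl,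
      ← Set.image_preimage_eq_inter_range, Set.ncard_image_of_injective _ f.injective]
  intro C₁ C₂ h₁ h₂
  rw [key C₁ h₁, key C₂ h₂,
    hα _ _ (h₁.preimage_orderEmbedding f hf) (h₂.preimage_orderEmbedding f hf)]

end Embedding

section Graded

variable {α : Type*} [PartialOrder α]

theorem Order.height_ne_top_of_finite [Finite α] (x : α) : height x ≠ ⊤ := by
  have := Fintype.ofFinite α
  refine ne_top_of_le_ne_top (ENat.natCast_ne_top (Fintype.card α)) (height_le fun p _ => ?_)
  exact_mod_cast p.length_lt_card.le

theorem RelSeries.strictMono_of_covBy (t : RelSeries {(a, b) : α × α | a ⋖ b}) :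
    StrictMono t :=
  LTSeries.strictMono (t.ofLE fun _ h => CovBy.lt h)

theorem RelSeries.ncard_range_of_covBy (t : RelSeries {(a, b) : α × α | a ⋖ b}) :
    (Set.range t).ncard = t.length + 1 :=
  (Set.ncard_range_of_injective t.strictMono_of_covBy.injective).trans (Nat.card_fin _)

variable [BoundedOrder α]

theorem RelSeries.isMaxChain_range_of_covBy (t : RelSeries {(a, b) : α × α | a ⋖ b})
    (h₀ : t.head = ⊥) (h₁ : t.last = ⊤) : IsMaxChain (· ≤ ·) (Set.range t) :=
  IsMaxChain.range_fin_of_covBy h₀ h₁ fun k => (t.step k).wcovBy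

variable [Finite α]

theorem IsPurePoset.length_eq_height_top (hα : IsPurePoset α)
    (t : RelSeries {(a, b) : α × α | a ⋖ b}) (h₀ : t.head = ⊥) (h₁ : t.last = ⊤) :
    (t.length : ℕ∞) = height (⊤ : α) := by
  refine le_antisymm ?_ (height_le fun s _ => ?_)
  · exact length_le_height (p := t.ofLE fun _ h => CovBy.lt h) le_top
  · obtain ⟨t', i, -, h₀', h₁'⟩ := s.exists_relSeries_covBy_and_head_eq_bot_and_last_eq_bot
    have hle : s.length ≤ t'.length := by simpa using Fintype.card_le_of_embedding i
    have heq : t'.length = t.length := by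
      simpa [RelSeries.ncard_range_of_covBy] using
        hα _ _ (t'.isMaxChain_range_of_covBy h₀' h₁') (t.isMaxChain_range_of_covBy h₀ h₁)
    exact_mod_cast heq ▸ hle

theorem IsPurePoset.height_eq_add_one_of_covBy (hα : IsPurePoset α) {a b : α} (hab : a ⋖ b) :
    height b = height a + 1 := by
  obtain ⟨t, i, hti, h₀, h₁⟩ :=
    LTSeries.exists_relSeries_covBy_and_head_eq_bot_and_last_eq_bot
      ((RelSeries.singleton _ a).snoc b hab.lt)
  have hheight : ∀ j, height (t j) = j :=
    height_eq_index_of_length_eq_height_last (p := t.ofLE fun _ h => CovBy.lt h)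
      ((hα.length_eq_height_top t h₀ h₁).trans (congrArg height h₁.symm))
  have ha : t (i 0) = a := congrFun hti 0
  have hb : t (i 1) = b := congrFun hti 1
  have hcov : i 0 ⋖ i 1 :=
    CovBy.of_image (OrderEmbedding.ofStrictMono t t.strictMono_of_covBy) (by simpa [ha, hb])
  have hha : height a = (i 0 : ℕ) := by simpa [ha] using hheight (i 0)
  have hhb : height b = (i 1 : ℕ) := by simpa [hb] using hheight (i 1)
  rw [hha, hhb, ← Nat.covBy_iff_add_one_eq.1 (Fin.covBy_iff.1 hcov)]
  norm_cast

end Graded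

section Phat

variable {P : Type*} [PartialOrder P]

theorem IsPurePoset.phat [Finite P] (hP : IsPurePoset P) : IsPurePoset (Phat P) := by
  refine hP.of_orderEmbedding (WithTop.coeOrderHom.trans WithBot.coeOrderHom) ?_
  rintro (_ | _ | u) hx y
  · exact Or.inl bot_le
  · exact Or.inr le_top
  · exact absurd ⟨u, rfl⟩ hx

theorem toHat_mono : Monotone (toHat : P → Phat P) :=
  fun _ _ h => WithBot.coe_le_coe.2 (WithTop.coe_le_coe.2 h)

theorem memHat_setOf_height_lt_iff {k : ℕ} (hk₁ : 1 ≤ k) (hk : (k : ℕ∞) ≤ height (⊤ : Phat P))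
    (x : Phat P) : memHat {u | height (toHat u) < k} x ↔ height x < k := by
  induction x using WithBot.recBotCoe with
  | bot => simp only [memHat, true_or, height_bot, true_iff]; exact_mod_cast hk₁
  | coe x =>
    induction x using WithTop.recTopCoe with
    | top => simpa [memHat, toHat] using hk
    | coe u => simp [memHat, toHat]

theorem mem_edgeCut_setOf_height_lt_iff [Finite P] (hP : IsPurePoset (Phat P)) {a b : Phat P}
    (hab : a ⋖ b) {k : ℕ} (hk₁ : 1 ≤ k) (hk : (k : ℕ∞) ≤ height (⊤ : Phat P)) :
    (a, b) ∈ edgeCut {u : P | height (toHat u) < k} ↔ height b = k := by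
  obtain ⟨n, hn⟩ := ENat.ne_top_iff_exists.1 (height_ne_top_of_finite a)
  simp only [edgeCut, edgeSet, Set.mem_ofPred_eq, memHat_setOf_height_lt_iff hk₁ hk,
    hP.height_eq_add_one_of_covBy hab, ← hn, hab, true_and]
  norm_cast
  omega

end Phat

/-- For a finite pure poset `P` and `τ_k = {u ∈ P : h(u) < k}` (heights taken in `P̂`),
each `τ_k` is an order ideal of `P`, and the edge set `E` of `P̂` is the disjoint union
of the sets `E(τ_k)`, `k = 1, …, h_P`.  On the Hibi toric variety this yields
`−K = ∑_{k=1}^{h_P} D_{E(τ_k)} ∼ h_P · D_{E(P)}`. -/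
theorem edgeSet_disjoint_union_of_pure (P : Type*) [PartialOrder P] [Fintype P]
    (hpure : IsPurePoset P) :
    (∀ k : ℕ, k ∈ Finset.Icc 1 (Order.height (⊤ : Phat P)).toNat →
      IsLowerSet {u : P | Order.height (toHat u) < (k : ℕ∞)}) ∧
    (∀ e ∈ edgeSet P, ∃! k : ℕ,
      k ∈ Finset.Icc 1 (Order.height (⊤ : Phat P)).toNat ∧
      e ∈ edgeCut {u : P | Order.height (toHat u) < (k : ℕ∞)}) := by
  refine ⟨fun k _ u v huv hv => (height_mono (toHat_mono huv)).trans_lt hv, ?_⟩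
  have hP : IsPurePoset (Phat P) := hpure.phat
  obtain ⟨N, hN⟩ := ENat.ne_top_iff_exists.1 (height_ne_top_of_finite (⊤ : Phat P))
  have hIcc : ∀ k : ℕ, k ∈ Finset.Icc 1 (height (⊤ : Phat P)).toNat ↔
      1 ≤ k ∧ (k : ℕ∞) ≤ height (⊤ : Phat P) := by
    simp [← hN]
  rintro ⟨a, b⟩ (hab : a ⋖ b)
  obtain ⟨n, hn⟩ := ENat.ne_top_iff_exists.1 (height_ne_top_of_finite b)
  have hb : 1 ≤ n ∧ (n : ℕ∞) ≤ height (⊤ : Phat P) := by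
    refine ⟨?_, hn ▸ height_mono le_top⟩
    exact_mod_cast Order.one_le_iff_pos.2 (hn ▸ height_pos.2 (not_isMin_of_lt hab.lt))
  refine ⟨n, ⟨(hIcc n).2 hb, (mem_edgeCut_setOf_height_lt_iff hP hab hb.1 hb.2).2 hn.symm⟩, ?_⟩
  rintro k ⟨hk, he⟩
  have hbk := (mem_edgeCut_setOf_height_lt_iff hP hab ((hIcc k).1 hk).1 ((hIcc k).1 hk).2).1 he
  exact_mod_cast hbk.symm.trans hn.symm
end

section
/- Let P be a finite pure poset and τ an order ideal of P. Then the only lattice points of the convex hull (in ℝ^P) of the finite set δ(E ∖ E(τ)) = {δ(e) : e ∈ E, e ∉ E(τ)} are the points δ(e) themselves; that is, conv(δ(E ∖ E(τ))) ∩ ℤ^P = δ(E ∖ E(τ)). (This is the combinatorial form of the terminality of the singularities of the Hibi toric variety ℙ_{Δ(P)}.) -/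
/-- `χ_w ∈ ℝ^P` for `w ∈ P̂`: the standard basis vector for `w ∈ P`, and `0` for `0̂, 1̂`. -/
def chiHatR {P : Type*} [DecidableEq P] : Phat P → (P → ℝ) :=
  WithBot.recBotCoe 0 (WithTop.recTopCoe 0 (fun v => Pi.single v 1))

/-- `δ(e) = χ_{t(e)} − χ_{s(e)} ∈ ℝ^P` for an edge `e = (t(e), s(e))` of `P̂`. -/
def deltaVecR {P : Type*} [DecidableEq P] (e : Phat P × Phat P) : P → ℝ :=
  chiHatR e.1 - chiHatR e.2

/-!
Every `δ(e)` is a difference `v - w` of two vertices of the simplex `conv {0, χ_u}`. A lattice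
point `x` of the convex hull of such differences has coordinates in `{-1, 0, 1}`, at most one of
them equal to `1` and at most one equal to `-1` (test against the functionals `x_u` and
`x_u + x_v`), so `x = v - w` for two such vertices. Since the vertices of a simplex are affinely
independent, the indicators of `v` and `w` on the vertex set are affine, and their difference is
a linear functional exposing `v - w` whenever `v ≠ w`; hence `x` is one of the points `δ(e)`.

The case `x = 0` is excluded by a functional negative on every `δ(e)` with `e ∉ E(τ)`: as `τ` is
an order ideal, such an edge stays inside `{0̂} ∪ τ` or inside its complement, so it suffices to
take a strictly monotone `c` on `P` that is positive on `τ` and negative off `τ`.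
-/

open Set Pointwise

section ConvexHull

variable {𝕜 E : Type*} [Field 𝕜] [LinearOrder 𝕜] [IsStrictOrderedRing 𝕜] [AddCommGroup E]
  [Module 𝕜 E] {s D V : Set E} {x : E}

theorem mem_of_mem_convexHull_of_forall_lt (f : E →ₗ[𝕜] 𝕜) (hx : x ∈ convexHull 𝕜 s)
    (h : ∀ y ∈ s, y ≠ x → f y < f x) : x ∈ s := by
  by_contra hxs
  have hsub : s ⊆ {y | f y < f x} := fun y hy => h y hy (ne_of_mem_of_not_mem hy hxs)
  exact lt_irrefl _ (convexHull_min hsub (convex_halfSpace_lt f.isLinear _) hx)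

theorem zero_notMem_convexHull_of_forall_neg (f : E →ₗ[𝕜] 𝕜) (h : ∀ y ∈ s, f y < 0) :
    (0 : E) ∉ convexHull 𝕜 s := fun h0 => by
  have : f 0 < 0 := convexHull_min h (convex_halfSpace_lt f.isLinear 0) h0
  simp at this

theorem apply_mem_Icc_of_mem_convexHull_sub (hD : D ⊆ V - V) (f : E →ₗ[𝕜] 𝕜)
    (hf : ∀ v ∈ V, f v ∈ Icc 0 1) (hx : x ∈ convexHull 𝕜 D) : f x ∈ Icc (-1) 1 := by
  refine convexHull_min (fun y hy => ?_) ((convex_Icc (-1 : 𝕜) 1).linear_preimage f) hx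
  obtain ⟨v, hv, w, hw, rfl⟩ := hD hy
  have := hf v hv
  have := hf w hw
  simp only [mem_preimage, map_sub, mem_Icc] at *
  constructor <;> linarith

theorem sub_mem_of_mem_convexHull_of_indicator [DecidableEq E] (hD : D ⊆ V - V) {v w : E}
    (hv : v ∈ V) (hw : w ∈ V) (hvw : v ≠ w) {f g : E →ₗ[𝕜] 𝕜} {a b : 𝕜}
    (hf : ∀ u ∈ V, f u = a + if u = v then 1 else 0)
    (hg : ∀ u ∈ V, g u = b + if u = w then 1 else 0) (hx : v - w ∈ convexHull 𝕜 D) :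
    v - w ∈ D := by
  refine mem_of_mem_convexHull_of_forall_lt (f - g) hx fun y hy hne => ?_
  obtain ⟨u, hu, u', hu', rfl⟩ := hD hy
  have huu' : ¬(u = v ∧ u' = w) := by
    rintro ⟨rfl, rfl⟩
    exact hne rfl
  simp only [LinearMap.sub_apply, map_sub, hf u hu, hf u' hu', hg u hu, hg u' hu', hf v hv,
    hf w hw, hg v hv, hg w hw, if_pos, if_neg hvw, if_neg (Ne.symm hvw)]
  split_ifs <;> simp_all <;> linarith

end ConvexHull

section SimplexVertices

variable {ι : Type*} [DecidableEq ι]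

def simplexVertices (ι : Type*) [DecidableEq ι] : Set (ι → ℝ) :=
  insert 0 (range fun i => Pi.single i 1)

theorem single_mem_simplexVertices (i : ι) : Pi.single i 1 ∈ simplexVertices ι :=
  mem_insert_of_mem _ ⟨i, rfl⟩

theorem indicator_mem_simplexVertices {s : Set ι} (hs : s.Subsingleton) :
    s.indicator 1 ∈ simplexVertices ι := by
  obtain rfl | ⟨i, rfl⟩ := hs.eq_empty_or_singleton
  · rw [indicator_empty]
    exact Or.inl rfl
  · convert single_mem_simplexVertices i
    ext j
    by_cases h : j = i <;> simp [h]

theorem exists_int_eq_of_mem_simplexVertices_sub {y : ι → ℝ}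
    (hy : y ∈ simplexVertices ι - simplexVertices ι) (i : ι) : ∃ k : ℤ, y i = k := by
  have hint : ∀ v ∈ simplexVertices ι, ∃ k : ℤ, v i = k := by
    rintro v (rfl | ⟨j, rfl⟩)
    · exact ⟨0, by simp⟩
    · exact ⟨(Pi.single j 1 : ι → ℤ) i, by by_cases h : i = j <;> simp [h]⟩
  obtain ⟨v, hv, w, hw, rfl⟩ := hy
  obtain ⟨k, hk⟩ := hint v hv
  obtain ⟨l, hl⟩ := hint w hw
  exact ⟨k - l, by simp [hk, hl]⟩

theorem mem_simplexVertices_sub_of_int {x : ι → ℝ} (hint : ∀ i, ∃ k : ℤ, x i = k)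
    (hx : ∀ i, x i ∈ Icc (-1) 1) (hpair : ∀ i j, i ≠ j → x i + x j ∈ Icc (-1) 1) :
    x ∈ simplexVertices ι - simplexVertices ι := by
  have hval : ∀ i, x i = -1 ∨ x i = 0 ∨ x i = 1 := by
    intro i
    obtain ⟨k, hk⟩ := hint i
    have hxi := hx i
    rw [hk, mem_Icc] at hxi
    have hk1 : -1 ≤ k ∧ k ≤ 1 := by exact_mod_cast hxi
    rw [hk]
    rcases (by omega : k = -1 ∨ k = 0 ∨ k = 1) with rfl | rfl | rfl <;> simp
  refine ⟨{i | x i = 1}.indicator 1, indicator_mem_simplexVertices ?_,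
    {i | x i = -1}.indicator 1, indicator_mem_simplexVertices ?_, ?_⟩
  · intro i hi j hj
    by_contra hij
    have := (hpair i j hij).2
    simp_all
    norm_num at this
  · intro i hi j hj
    by_contra hij
    have := (hpair i j hij).1
    simp_all
    norm_num at this
  · ext i
    rcases hval i with h | h | h <;> norm_num [indicator_apply, h]

variable [Fintype ι]

theorem exists_linearMap_eq_indicator {v : ι → ℝ} (hv : v ∈ simplexVertices ι) :
    ∃ f : (ι → ℝ) →ₗ[ℝ] ℝ, ∃ a : ℝ, ∀ u ∈ simplexVertices ι,
      f u = a + if u = v then 1 else 0 := by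
  rcases hv with rfl | ⟨j, rfl⟩
  · refine ⟨dotProductBilin ℝ ℝ (-1), -1, ?_⟩
    rintro _ (rfl | ⟨i, rfl⟩) <;> simp
  · refine ⟨LinearMap.proj j, 0, ?_⟩
    rintro _ (rfl | ⟨i, rfl⟩)
    · simp [eq_comm]
    · by_cases h : i = j
      · simp [h]
      · have : Pi.single i 1 ≠ (Pi.single j 1 : ι → ℝ) := fun e => h (by
          simpa [Pi.single_apply, eq_comm] using congrFun e j)
        simp [this, Ne.symm h]

theorem mem_of_mem_convexHull_of_int {D : Set (ι → ℝ)}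
    (hD : D ⊆ simplexVertices ι - simplexVertices ι) {x : ι → ℝ} (hx : x ∈ convexHull ℝ D)
    (hint : ∀ i, ∃ k : ℤ, x i = k) (hx0 : x ≠ 0) : x ∈ D := by
  have hbound : ∀ c : ι → ℝ, (∀ i, c i ∈ Icc 0 1) → c ⬝ᵥ x ∈ Icc (-1) 1 := fun c hc =>
    apply_mem_Icc_of_mem_convexHull_sub hD (dotProductBilin ℝ ℝ c)
      (by rintro _ (rfl | ⟨i, rfl⟩) <;> simp [hc]) hx
  have hx' : x ∈ simplexVertices ι - simplexVertices ι := by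
    refine mem_simplexVertices_sub_of_int hint (fun i => ?_) (fun i j hij => ?_)
    · simpa using hbound (Pi.single i 1) fun k => by by_cases h : k = i <;> simp [h]
    · have := hbound (Pi.single i 1 + Pi.single j 1) fun k => by
        by_cases h : k = i <;> by_cases h' : k = j <;> simp_all
      rwa [add_dotProduct, single_dotProduct, single_dotProduct, one_mul, one_mul] at this
  obtain ⟨v, hv, w, hw, rfl⟩ := hx'
  obtain ⟨f, a, hf⟩ := exists_linearMap_eq_indicator hv
  obtain ⟨g, b, hg⟩ := exists_linearMap_eq_indicator hw
  exact sub_mem_of_mem_convexHull_of_indicator hD hv hw (sub_ne_zero.1 hx0) hf hg hx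

end SimplexVertices

section Phat

variable {P : Type*}

@[elab_as_elim]
theorem Phat.induction_on {motive : Phat P → Prop} (w : Phat P) (bot : motive ⊥)
    (top : motive ⊤) (coe : ∀ u, motive (toHat u)) : motive w := by
  induction w using WithBot.recBotCoe with
  | bot => exact bot
  | coe w =>
    induction w using WithTop.recTopCoe with
    | top => exact top
    | coe u => exact coe u

@[simp]
theorem toHat_lt_toHat [Preorder P] {u v : P} : toHat u < toHat v ↔ u < v := by
  simp [toHat]

@[simp]
theorem memHat_bot (τ : Set P) : memHat τ ⊥ := Or.inl rfl

@[simp]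
theorem not_memHat_top (τ : Set P) : ¬memHat τ ⊤ := by
  rintro (h | ⟨u, -, h⟩) <;> simp [toHat] at h

@[simp]
theorem memHat_toHat {τ : Set P} {u : P} : memHat τ (toHat u) ↔ u ∈ τ := by
  simp [memHat, toHat]

theorem exists_pos_on_neg_off_strictMono [PartialOrder P] [Finite P] (τ : Set P) :
    ∃ c : P → ℝ, (∀ u ∈ τ, 0 < c u) ∧ (∀ u ∉ τ, c u < 0) ∧
      ∀ ⦃u v⦄, u < v → (u ∈ τ ↔ v ∈ τ) → c u < c v := by
  classical
  set r : P → ℝ := fun u => (Iic u).ncard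
  have hr_pos (u : P) : 0 < r u := by
    simpa [r] using (ncard_pos (Iic u).toFinite).2 ⟨u, le_rfl⟩
  have hr_le (u : P) : r u ≤ Nat.card P := by
    simpa [r] using ncard_le_card (Iic u)
  have hr_mono ⦃u v : P⦄ (h : u < v) : r u < r v := by
    simpa [r] using ncard_lt_ncard (Iic_ssubset_Iic.2 h)
  refine ⟨fun u => if u ∈ τ then r u else r u - (Nat.card P + 1), fun u hu => ?_,
    fun u hu => ?_, fun u v huv hτ => ?_⟩
  · simpa [hu] using hr_pos u
  · simp only [hu, if_false]
    linarith [hr_le u]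
  · by_cases hu : u ∈ τ
    · simpa [hu, hτ.1 hu] using hr_mono huv
    · simpa [hu, mt hτ.2 hu] using hr_mono huv

variable [DecidableEq P]

@[simp]
theorem chiHatR_bot : chiHatR (⊥ : Phat P) = 0 := rfl

@[simp]
theorem chiHatR_top : chiHatR (⊤ : Phat P) = 0 := rfl

@[simp]
theorem chiHatR_toHat (u : P) : chiHatR (toHat u) = Pi.single u 1 := rfl

theorem chiHatR_mem_simplexVertices (w : Phat P) : chiHatR w ∈ simplexVertices P := by
  induction w using Phat.induction_on with
  | bot | top => simp [simplexVertices]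
  | coe u => simpa using single_mem_simplexVertices u

theorem deltaVecR_mem_simplexVertices_sub (e : Phat P × Phat P) :
    deltaVecR e ∈ simplexVertices P - simplexVertices P :=
  ⟨_, chiHatR_mem_simplexVertices e.1, _, chiHatR_mem_simplexVertices e.2, rfl⟩

theorem dotProduct_deltaVecR_neg [PartialOrder P] [Fintype P] {τ : Set P} (hτ : IsLowerSet τ)
    {c : P → ℝ} (hpos : ∀ u ∈ τ, 0 < c u) (hneg : ∀ u ∉ τ, c u < 0)
    (hmono : ∀ ⦃u v⦄, u < v → (u ∈ τ ↔ v ∈ τ) → c u < c v) {e : Phat P × Phat P}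
    (he : e ∈ edgeSet P \ edgeCut τ) : c ⬝ᵥ deltaVecR e < 0 := by
  obtain ⟨t, s⟩ := e
  obtain ⟨hts, hcut⟩ := he
  have hts : t ⋖ s := hts
  have hmem : memHat τ t → memHat τ s := fun ht => by_contra fun hs => hcut ⟨hts, ht, hs⟩
  simp only [deltaVecR, dotProduct_sub]
  induction t using Phat.induction_on with
  | bot =>
    induction s using Phat.induction_on with
    | bot => exact absurd hts.lt (lt_irrefl _)
    | top => simp at hmem
    | coe v => simpa using hpos v (by simpa using hmem)
  | top => exact absurd hts.lt not_top_lt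
  | coe u =>
    induction s using Phat.induction_on with
    | bot => exact absurd hts.lt not_lt_bot
    | top => simpa using hneg u (by simpa using hmem)
    | coe v =>
      have huv : u < v := by simpa using hts.lt
      simpa using hmono huv ⟨by simpa using hmem, fun hv => hτ huv.le hv⟩

theorem zero_notMem_convexHull_deltaVecR [PartialOrder P] [Fintype P] {τ : Set P}
    (hτ : IsLowerSet τ) : (0 : P → ℝ) ∉ convexHull ℝ (deltaVecR '' (edgeSet P \ edgeCut τ)) := by
  obtain ⟨c, hpos, hneg, hmono⟩ := exists_pos_on_neg_off_strictMono τ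
  refine zero_notMem_convexHull_of_forall_neg (dotProductBilin ℝ ℝ c) ?_
  rintro _ ⟨e, he, rfl⟩
  exact dotProduct_deltaVecR_neg hτ hpos hneg hmono he

end Phat

theorem latticePoints_convexHull_delta_general (P : Type*) [PartialOrder P] [Fintype P]
    [DecidableEq P] (τ : Set P) (hτ : IsLowerSet τ) :
    {x : P → ℝ |
        x ∈ convexHull ℝ (deltaVecR '' (edgeSet P \ edgeCut τ)) ∧
          ∀ u : P, ∃ k : ℤ, x u = k}
      = deltaVecR '' (edgeSet P \ edgeCut τ) := by
  ext x
  constructor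
  · rintro ⟨hx, hint⟩
    refine mem_of_mem_convexHull_of_int ?_ hx hint ?_
    · rintro _ ⟨e, -, rfl⟩
      exact deltaVecR_mem_simplexVertices_sub e
    · rintro rfl
      exact zero_notMem_convexHull_deltaVecR hτ hx
  · rintro ⟨e, he, rfl⟩
    exact ⟨subset_convexHull ℝ _ ⟨e, he, rfl⟩,
      exists_int_eq_of_mem_simplexVertices_sub (deltaVecR_mem_simplexVertices_sub e)⟩

/-- For a finite pure poset `P` and an order ideal `τ`, the only lattice points of the
convex hull of `δ(E ∖ E(τ)) ⊆ ℝ^P` are the points `δ(e)` themselves — the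
combinatorial form of the terminality of the singularities of `ℙ_{Δ(P)}`. -/
theorem latticePoints_convexHull_delta (P : Type*) [PartialOrder P] [Fintype P]
    [DecidableEq P] (hpure : IsPurePoset P) (τ : Set P) (hτ : IsLowerSet τ) :
    {x : P → ℝ |
        x ∈ convexHull ℝ (deltaVecR '' (edgeSet P \ edgeCut τ)) ∧
          ∀ u : P, ∃ k : ℤ, x u = k}
      = deltaVecR '' (edgeSet P \ edgeCut τ) :=
  latticePoints_convexHull_delta_general P τ hτ
end
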